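/- For vectors u, w ∈ ℝ^{2l}, the antisymmetric matrix B = u wᵀ - w uᵀ has rank at most 2, and consequently for any antisymmetric 2l×2l matrix A, the function ζ ↦ Pf(A + ζB) is an affine (degree ≤ 1) polynomial in ζ. -/

import Mathlib

open Finset

/-- The first element of the `i`-th pair in `Fin (2*n)`. -/
def pairLo {n : ℕ} (i : Fin n) : Fin (2 * n) := ⟨2 * i.1, by have := i.isLt; omega⟩

/-- The second element of the `i`-th pair in `Fin (2*n)`. -/
def pairHi {n : ℕ} (i : Fin n) : Fin (2 * n) := ⟨2 * i.1 + 1, by have := i.isLt; omega⟩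

/-- The Pfaffian of a `2n × 2n` matrix, defined as the sum over perfect matchings
(encoded as permutations in canonical form) of the signed product of entries. -/
def pf {n : ℕ} {R : Type*} [CommRing R] (A : Matrix (Fin (2 * n)) (Fin (2 * n)) R) : R :=
  ∑ σ ∈ Finset.univ.filter
      (fun σ : Equiv.Perm (Fin (2 * n)) =>
        (∀ i : Fin n, σ (pairLo i) < σ (pairHi i)) ∧
        ∀ i j : Fin n, i < j → σ (pairLo i) < σ (pairLo j)),
    (Equiv.Perm.sign σ : ℤ) • ∏ i : Fin n, A (σ (pairLo i)) (σ (pairHi i))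

/-!
The rank bound holds because `u wᵀ - w uᵀ = [u w] [w -u]ᵀ` factors through a two-dimensional space.

For the Pfaffian, pass to the unnormalized sum `∑_σ sgn σ ∏_k X (σ (2k)) (σ (2k+1))` over all
permutations: for antisymmetric `X` it is `2ˡ l! pf X`, since reordering a pair or permuting the
pairs as blocks does not change a term. Expanding the product for `X = A + ζ B` gives
`∑_t ζ^|t| c_t`, where `c_t` is the sum with the pairs in `t` weighted by `B` and the others by `A`.
Write `B = M - Mᵀ` with `M = u wᵀ`; transposing the weight of one pair only flips the sign of the
sum, so for `|t| ≥ 2` the coefficient `c_t` is a multiple of a sum in which two pairs carry `u` in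
their first slot. The transposition of these two slots is odd and fixes every product, so `c_t = 0`.
-/
open Equiv Equiv.Perm Matrix

section Pairs

variable {n : ℕ}

@[simp]
lemma pairLo_ne_pairHi (i j : Fin n) : pairLo i ≠ pairHi j := by
  simp only [pairLo, pairHi, ne_eq, Fin.ext_iff]
  omega

@[simp]
lemma pairHi_ne_pairLo (i j : Fin n) : pairHi i ≠ pairLo j :=
  (pairLo_ne_pairHi j i).symm

@[simp]
lemma pairLo_inj {i j : Fin n} : pairLo i = pairLo j ↔ i = j := by
  simp only [pairLo, Fin.ext_iff]
  omega

@[simp]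
lemma pairHi_inj {i j : Fin n} : pairHi i = pairHi j ↔ i = j := by
  simp only [pairHi, Fin.ext_iff]
  omega

/-- Position `2 i + c` is slot `c` of the `i`-th pair. -/
def pairEquiv : Fin n × Fin 2 ≃ Fin (2 * n) :=
  finProdFinEquiv.trans (finCongr (Nat.mul_comm n 2))

lemma pairEquiv_zero (i : Fin n) : pairEquiv (i, 0) = pairLo i := by
  ext; simp [pairEquiv, pairLo, finProdFinEquiv]

lemma pairEquiv_one (i : Fin n) : pairEquiv (i, 1) = pairHi i := by
  ext; simp [pairEquiv, pairHi, finProdFinEquiv, add_comm]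

def blockPerm : Perm (Fin n) →* Perm (Fin (2 * n)) where
  toFun π := pairEquiv.permCongr (prodCongrLeft fun _ => π)
  map_one' := by
    refine Equiv.ext fun x => ?_
    obtain ⟨⟨i, c⟩, rfl⟩ := pairEquiv.surjective x
    simp [permCongr_apply]
  map_mul' π ρ := by
    refine Equiv.ext fun x => ?_
    obtain ⟨⟨i, c⟩, rfl⟩ := pairEquiv.surjective x
    simp [permCongr_apply]

lemma blockPerm_pairEquiv (π : Perm (Fin n)) (i : Fin n) (c : Fin 2) :
    blockPerm π (pairEquiv (i, c)) = pairEquiv (π i, c) := by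
  simp [blockPerm, permCongr_apply]

@[simp]
lemma blockPerm_pairLo (π : Perm (Fin n)) (i : Fin n) : blockPerm π (pairLo i) = pairLo (π i) := by
  rw [← pairEquiv_zero, blockPerm_pairEquiv, pairEquiv_zero]

@[simp]
lemma blockPerm_pairHi (π : Perm (Fin n)) (i : Fin n) : blockPerm π (pairHi i) = pairHi (π i) := by
  rw [← pairEquiv_one, blockPerm_pairEquiv, pairEquiv_one]

@[simp]
lemma sign_blockPerm (π : Perm (Fin n)) : sign (blockPerm π) = 1 := by
  simp [blockPerm, sign_prodCongrLeft]

end Pairs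

theorem Equiv.Perm.sum_sign_smul_eq_zero_of_mul_swap {α M : Type*} [DecidableEq α] [Fintype α]
    [AddCommGroup M] (f : Perm α → M) {p q : α} (hpq : p ≠ q)
    (hf : ∀ σ, f (σ * swap p q) = f σ) : ∑ σ, (sign σ : ℤ) • f σ = 0 := by
  refine Finset.sum_ninvolution (fun σ => σ * swap p q) (fun σ => ?_) (fun σ _ => ?_)
    (fun _ => Finset.mem_univ _) (fun σ => by simp [mul_assoc])
  · simp [hf, sign_mul, sign_swap hpq]
  · simpa [mul_eq_left] using hpq

section PairProd

variable {R : Type*} [CommRing R] {n : ℕ}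

def pairProd (F : Fin n → Matrix (Fin (2 * n)) (Fin (2 * n)) R) (σ : Perm (Fin (2 * n))) : R :=
  ∏ k, F k (σ (pairLo k)) (σ (pairHi k))

/-- The unnormalized Pfaffian, polarized: it is multilinear in the family `F`. -/
def altPairSum (F : Fin n → Matrix (Fin (2 * n)) (Fin (2 * n)) R) : R :=
  ∑ σ, (sign σ : ℤ) • pairProd F σ

lemma pairProd_update (F : Fin n → Matrix (Fin (2 * n)) (Fin (2 * n)) R) (i : Fin n)
    (M : Matrix (Fin (2 * n)) (Fin (2 * n)) R) (σ : Perm (Fin (2 * n))) :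
    pairProd (Function.update F i M) σ =
      M (σ (pairLo i)) (σ (pairHi i)) * ∏ k ∈ univ.erase i, F k (σ (pairLo k)) (σ (pairHi k)) := by
  rw [pairProd, ← mul_prod_erase univ _ (mem_univ i), Function.update_self]
  congr 1
  exact prod_congr rfl fun k hk => by rw [Function.update_of_ne (ne_of_mem_erase hk)]

lemma altPairSum_update_sub (F : Fin n → Matrix (Fin (2 * n)) (Fin (2 * n)) R) (i : Fin n)
    (M N : Matrix (Fin (2 * n)) (Fin (2 * n)) R) :
    altPairSum (Function.update F i (M - N)) =
      altPairSum (Function.update F i M) - altPairSum (Function.update F i N) := by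
  simp only [altPairSum, pairProd_update, Matrix.sub_apply, sub_mul, smul_sub, sum_sub_distrib]

lemma pairProd_mul_swap (F : Fin n → Matrix (Fin (2 * n)) (Fin (2 * n)) R) (i : Fin n)
    (σ : Perm (Fin (2 * n))) :
    pairProd F (σ * swap (pairLo i) (pairHi i)) = pairProd (Function.update F i (F i)ᵀ) σ := by
  rw [pairProd_update, pairProd, ← mul_prod_erase univ _ (mem_univ i)]
  congr 1
  · simp
  · refine prod_congr rfl fun k hk => ?_
    have hki : k ≠ i := ne_of_mem_erase hk
    simp [swap_apply_of_ne_of_ne, hki]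

lemma altPairSum_update_transpose (F : Fin n → Matrix (Fin (2 * n)) (Fin (2 * n)) R) (i : Fin n)
    (M : Matrix (Fin (2 * n)) (Fin (2 * n)) R) :
    altPairSum (Function.update F i Mᵀ) = -altPairSum (Function.update F i M) := by
  rw [altPairSum, altPairSum, ← sum_neg_distrib]
  refine Fintype.sum_equiv (Equiv.mulRight (swap (pairLo i) (pairHi i))) _ _ fun σ => ?_
  simp [pairProd_mul_swap, Perm.sign_mul]

lemma altPairSum_eq_two_mul_update_of_eq_sub_transpose
    {F : Fin n → Matrix (Fin (2 * n)) (Fin (2 * n)) R} {i : Fin n}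
    {M : Matrix (Fin (2 * n)) (Fin (2 * n)) R} (hFi : F i = M - Mᵀ) :
    altPairSum F = 2 * altPairSum (Function.update F i M) := by
  rw [← Function.update_eq_self i F, hFi, altPairSum_update_sub, altPairSum_update_transpose,
    Function.update_idem]
  ring

lemma altPairSum_eq_zero_of_eq_vecMulVec {F : Fin n → Matrix (Fin (2 * n)) (Fin (2 * n)) R}
    {i j : Fin n} (hij : i ≠ j) (u x y : Fin (2 * n) → R) (hFi : F i = vecMulVec u x)
    (hFj : F j = vecMulVec u y) : altPairSum F = 0 := by
  refine sum_sign_smul_eq_zero_of_mul_swap _ (pairLo_inj.not.mpr hij) fun σ => ?_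
  have hj : j ∈ univ.erase i := mem_erase.2 ⟨hij.symm, mem_univ j⟩
  rw [pairProd, pairProd, ← mul_prod_erase univ _ (mem_univ i),
    ← mul_prod_erase univ _ (mem_univ i), ← mul_prod_erase _ _ hj, ← mul_prod_erase _ _ hj]
  have hrest : ∀ k ∈ (univ.erase i).erase j, F k ((σ * swap (pairLo i) (pairLo j)) (pairLo k))
      ((σ * swap (pairLo i) (pairLo j)) (pairHi k)) = F k (σ (pairLo k)) (σ (pairHi k)) := by
    intro k hk
    have hkj := ne_of_mem_erase hk
    have hki := ne_of_mem_erase (mem_of_mem_erase hk)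
    simp [swap_apply_of_ne_of_ne, hki, hkj]
  rw [prod_congr rfl hrest, hFi, hFj]
  simp [swap_apply_of_ne_of_ne, vecMulVec_apply]
  ring

lemma altPairSum_eq_zero_of_two_eq_rankTwo {F : Fin n → Matrix (Fin (2 * n)) (Fin (2 * n)) R}
    {i j : Fin n} (hij : i ≠ j) (u v : Fin (2 * n) → R)
    (hFi : F i = vecMulVec u v - vecMulVec v u) (hFj : F j = vecMulVec u v - vecMulVec v u) :
    altPairSum F = 0 := by
  rw [← transpose_vecMulVec u v] at hFi hFj
  rw [altPairSum_eq_two_mul_update_of_eq_sub_transpose hFi,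
    altPairSum_eq_two_mul_update_of_eq_sub_transpose (i := j) (M := vecMulVec u v)
      (by rwa [Function.update_of_ne hij.symm]),
    altPairSum_eq_zero_of_eq_vecMulVec hij u v v (by simp [Function.update_of_ne hij]) (by simp)]
  ring

end PairProd

section Normalization

variable {R : Type*} [CommRing R] {n : ℕ}

lemma sign_smul_pairProd_mul_swap {X : Matrix (Fin (2 * n)) (Fin (2 * n)) R} (hX : Xᵀ = -X)
    (σ : Perm (Fin (2 * n))) (i : Fin n) :
    (sign (σ * swap (pairLo i) (pairHi i)) : ℤ) •
        pairProd (fun _ => X) (σ * swap (pairLo i) (pairHi i)) =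
      (sign σ : ℤ) • pairProd (fun _ => X) σ := by
  have hneg : pairProd (Function.update (fun _ => X) i (-X)) σ = -pairProd (fun _ => X) σ := by
    rw [pairProd_update, pairProd, ← mul_prod_erase univ _ (mem_univ i), Matrix.neg_apply, neg_mul]
  simp [pairProd_mul_swap, hX, hneg, Perm.sign_mul]

def pairSortedUpTo (n m : ℕ) : Finset (Perm (Fin (2 * n))) :=
  {σ | ∀ i : Fin n, (i : ℕ) < m → σ (pairLo i) < σ (pairHi i)}

lemma mem_pairSortedUpTo_succ_iff {i : Fin n} {σ : Perm (Fin (2 * n))} :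
    σ ∈ pairSortedUpTo n (i + 1) ↔ σ ∈ pairSortedUpTo n i ∧ σ (pairLo i) < σ (pairHi i) := by
  simp only [pairSortedUpTo, mem_filter, mem_univ, true_and]
  refine ⟨fun h => ⟨fun k hk => h k (by omega), h i (by omega)⟩, fun ⟨h, hlt⟩ k hk => ?_⟩
  rcases Nat.lt_succ_iff_lt_or_eq.mp hk with hk | hk
  · exact h k hk
  · rwa [Fin.ext hk]

lemma mul_swap_mem_pairSortedUpTo_iff {m : ℕ} {i : Fin n} (hi : m ≤ i) {σ : Perm (Fin (2 * n))} :
    σ * swap (pairLo i) (pairHi i) ∈ pairSortedUpTo n m ↔ σ ∈ pairSortedUpTo n m := by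
  have hfix : ∀ k : Fin n, (k : ℕ) < m →
      (σ * swap (pairLo i) (pairHi i)) (pairLo k) = σ (pairLo k) ∧
      (σ * swap (pairLo i) (pairHi i)) (pairHi k) = σ (pairHi k) := fun k hk => by
    have hki : k ≠ i := fun h => by subst h; omega
    simp [swap_apply_of_ne_of_ne, hki]
  simp only [pairSortedUpTo, mem_filter, mem_univ, true_and]
  exact forall₂_congr fun k hk => by rw [(hfix k hk).1, (hfix k hk).2]

lemma sum_pairSortedUpTo_eq_two_mul_succ {X : Matrix (Fin (2 * n)) (Fin (2 * n)) R}
    (hX : Xᵀ = -X) (i : Fin n) :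
    ∑ σ ∈ pairSortedUpTo n i, (sign σ : ℤ) • pairProd (fun _ => X) σ =
      2 * ∑ σ ∈ pairSortedUpTo n (i + 1), (sign σ : ℤ) • pairProd (fun _ => X) σ := by
  have hswap : ∀ σ : Perm (Fin (2 * n)), σ * swap (pairLo i) (pairHi i) * swap (pairLo i) (pairHi i)
      = σ := fun σ => by simp [mul_assoc]
  have hunsorted : ∑ σ ∈ pairSortedUpTo n i with ¬ σ (pairLo i) < σ (pairHi i),
      (sign σ : ℤ) • pairProd (fun _ => X) σ =
      ∑ σ ∈ pairSortedUpTo n (i + 1), (sign σ : ℤ) • pairProd (fun _ => X) σ := by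
    refine sum_nbij' (· * swap (pairLo i) (pairHi i)) (· * swap (pairLo i) (pairHi i))
      (fun σ hσ => ?_) (fun σ hσ => ?_) (fun σ _ => hswap σ) (fun σ _ => hswap σ)
      (fun σ _ => (sign_smul_pairProd_mul_swap hX σ i).symm)
    · rw [mem_filter] at hσ
      rw [mem_pairSortedUpTo_succ_iff, mul_swap_mem_pairSortedUpTo_iff le_rfl]
      simp only [Perm.mul_apply, swap_apply_left, swap_apply_right]
      exact ⟨hσ.1, lt_of_le_of_ne (not_lt.mp hσ.2) (σ.injective.ne (pairHi_ne_pairLo i i))⟩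
    · rw [mem_pairSortedUpTo_succ_iff] at hσ
      rw [mem_filter, mul_swap_mem_pairSortedUpTo_iff le_rfl]
      simp only [Perm.mul_apply, swap_apply_left, swap_apply_right]
      exact ⟨hσ.1, lt_asymm hσ.2⟩
  have hsorted : {σ ∈ pairSortedUpTo n i | σ (pairLo i) < σ (pairHi i)} =
      pairSortedUpTo n (i + 1) := by
    ext σ
    rw [mem_filter, mem_pairSortedUpTo_succ_iff]
  rw [← sum_filter_add_sum_filter_not _ (fun σ => σ (pairLo i) < σ (pairHi i)), hunsorted,
    hsorted]
  ring

lemma sum_univ_eq_two_pow_mul_sum_pairSortedUpTo {X : Matrix (Fin (2 * n)) (Fin (2 * n)) R}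
    (hX : Xᵀ = -X) :
    ∑ σ, (sign σ : ℤ) • pairProd (fun _ => X) σ =
      2 ^ n * ∑ σ ∈ pairSortedUpTo n n, (sign σ : ℤ) • pairProd (fun _ => X) σ := by
  suffices h : ∀ m ≤ n, ∑ σ, (sign σ : ℤ) • pairProd (fun _ => X) σ =
      2 ^ m * ∑ σ ∈ pairSortedUpTo n m, (sign σ : ℤ) • pairProd (fun _ => X) σ from h n le_rfl
  intro m
  induction m with
  | zero => intro; simp [pairSortedUpTo]
  | succ m ih =>
    intro hm
    rw [ih (by omega), sum_pairSortedUpTo_eq_two_mul_succ hX ⟨m, hm⟩]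
    ring

lemma sign_smul_pairProd_mul_blockPerm (X : Matrix (Fin (2 * n)) (Fin (2 * n)) R)
    (σ : Perm (Fin (2 * n))) (π : Perm (Fin n)) :
    (sign (σ * blockPerm π) : ℤ) • pairProd (fun _ => X) (σ * blockPerm π) =
      (sign σ : ℤ) • pairProd (fun _ => X) σ := by
  simp only [Perm.sign_mul, sign_blockPerm, mul_one, pairProd, Perm.mul_apply, blockPerm_pairLo,
    blockPerm_pairHi]
  rw [Equiv.prod_comp π fun k => X (σ (pairLo k)) (σ (pairHi k))]

lemma sort_pairLo_mul_blockPerm {σ : Perm (Fin (2 * n))} (hσ : StrictMono fun i => σ (pairLo i))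
    (π : Perm (Fin n)) : Tuple.sort (fun i => (σ * blockPerm π) (pairLo i)) = π⁻¹ := by
  refine (Tuple.eq_sort_iff.2 ⟨?_, fun i j hij h => ?_⟩).symm
  · simpa [Function.comp_def] using hσ.monotone
  · simp only [Perm.mul_apply, blockPerm_pairLo, Perm.coe_inv, Equiv.apply_symm_apply] at h
    exact absurd (hσ.injective h) hij.ne

lemma sum_pairSortedUpTo_eq_factorial_mul_pf (X : Matrix (Fin (2 * n)) (Fin (2 * n)) R) :
    ∑ σ ∈ pairSortedUpTo n n, (sign σ : ℤ) • pairProd (fun _ => X) σ = n.factorial * pf X := by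
  set sorting : Perm (Fin (2 * n)) → Perm (Fin n) := fun σ => Tuple.sort fun i => σ (pairLo i)
  have hcard : #(univ : Finset (Perm (Fin n))) = n.factorial := by simp [Fintype.card_perm]
  rw [pf, ← hcard, ← nsmul_eq_mul, ← sum_const, ← sum_product']
  refine (sum_nbij' (fun p => p.2 * blockPerm p.1)
    (fun σ => ((sorting σ)⁻¹, σ * blockPerm (sorting σ))) (fun p hp => ?_) (fun σ hσ => ?_)
    (fun p hp => ?_) (fun σ _ => ?_)
    (fun p _ => (sign_smul_pairProd_mul_blockPerm X p.2 p.1).symm)).symm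
  · simp only [mem_product, mem_filter, mem_univ, true_and] at hp
    simp only [pairSortedUpTo, mem_filter, mem_univ, true_and, Perm.mul_apply, blockPerm_pairLo,
      blockPerm_pairHi]
    exact fun i _ => hp.1 _
  · simp only [pairSortedUpTo, mem_filter, mem_univ, true_and] at hσ
    have hinj : Function.Injective fun i => σ (pairLo i) :=
      fun i j h => pairLo_inj.mp (σ.injective h)
    simp only [mem_product, mem_filter, mem_univ, true_and, Perm.mul_apply,
      blockPerm_pairLo, blockPerm_pairHi]
    exact ⟨fun i => hσ _ (Fin.is_lt _),
      (Tuple.monotone_sort _).strictMono_of_injective (hinj.comp (sorting σ).injective)⟩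
  · simp only [mem_product, mem_filter, mem_univ, true_and] at hp
    simp only [sorting, sort_pairLo_mul_blockPerm hp.2, inv_inv, mul_assoc, ← map_mul,
      mul_inv_cancel, map_one, mul_one]
  · simp [mul_assoc]

lemma altPairSum_const_eq_mul_pf {X : Matrix (Fin (2 * n)) (Fin (2 * n)) R} (hX : Xᵀ = -X) :
    altPairSum (fun _ => X) = 2 ^ n * n.factorial * pf X := by
  rw [altPairSum, sum_univ_eq_two_pow_mul_sum_pairSortedUpTo hX,
    sum_pairSortedUpTo_eq_factorial_mul_pf, mul_assoc]

end Normalization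

section RankTwoPerturbation

variable {R : Type*} [CommRing R] {n : ℕ}

lemma pairProd_const_add_smul (A B : Matrix (Fin (2 * n)) (Fin (2 * n)) R) (ζ : R)
    (σ : Perm (Fin (2 * n))) :
    pairProd (fun _ => A + ζ • B) σ =
      ∑ t : Finset (Fin n), ζ ^ #t * pairProd (fun k => if k ∈ t then B else A) σ := by
  simp only [pairProd, Matrix.add_apply, Matrix.smul_apply, smul_eq_mul, add_comm (A _ _),
    Fintype.prod_add]
  refine sum_congr rfl fun t _ => ?_
  have hite : ∀ k, (if k ∈ t then B else A) (σ (pairLo k)) (σ (pairHi k)) =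
      if k ∈ t then B (σ (pairLo k)) (σ (pairHi k)) else A (σ (pairLo k)) (σ (pairHi k)) :=
    fun k => by split_ifs <;> rfl
  simp only [hite, prod_ite, prod_mul_distrib, prod_const, filter_mem_eq_inter, univ_inter,
    filter_not, compl_eq_univ_sdiff]
  ring

lemma altPairSum_const_add_smul (A B : Matrix (Fin (2 * n)) (Fin (2 * n)) R) (ζ : R) :
    altPairSum (fun _ => A + ζ • B) =
      ∑ t : Finset (Fin n), ζ ^ #t * altPairSum (fun k => if k ∈ t then B else A) := by
  simp only [altPairSum, pairProd_const_add_smul, smul_sum, mul_sum, mul_smul_comm]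
  exact sum_comm

lemma exists_sum_pow_card_mul_eq_add_mul {ι : Type*} [Fintype ι] (c : Finset ι → R)
    (hc : ∀ t, 2 ≤ #t → c t = 0) : ∃ a b : R, ∀ ζ : R, ∑ t, ζ ^ #t * c t = a + b * ζ := by
  refine ⟨∑ t with #t = 0, c t, ∑ t with #t = 1, c t, fun ζ => ?_⟩
  rw [sum_filter, sum_filter, sum_mul, ← sum_add_distrib]
  refine sum_congr rfl fun t _ => ?_
  match h : #t with
  | 0 => simp
  | 1 => simp [mul_comm]
  | k + 2 => simp [hc t (by omega)]

lemma exists_altPairSum_const_add_smul_rankTwo_eq (A : Matrix (Fin (2 * n)) (Fin (2 * n)) R)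
    (u v : Fin (2 * n) → R) : ∃ c d : R, ∀ ζ : R,
      altPairSum (fun _ => A + ζ • (vecMulVec u v - vecMulVec v u)) = c + d * ζ := by
  simp_rw [altPairSum_const_add_smul]
  refine exists_sum_pow_card_mul_eq_add_mul _ fun t ht => ?_
  obtain ⟨i, hi, j, hj, hij⟩ := one_lt_card.mp ht
  exact altPairSum_eq_zero_of_two_eq_rankTwo hij u v (if_pos hi) (if_pos hj)

end RankTwoPerturbation

lemma rank_vecMulVec_sub_vecMulVec_le_two {m R : Type*} [Fintype m] [CommRing R]
    [StrongRankCondition R] (u v : m → R) : (vecMulVec u v - vecMulVec v u).rank ≤ 2 := by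
  have hfactor : vecMulVec u v - vecMulVec v u = (of ![u, v])ᵀ * of ![v, -u] := by
    ext i j
    simp [Matrix.mul_apply, Fin.sum_univ_two, vecMulVec_apply]
    ring
  rw [hfactor]
  exact (rank_mul_le_left _ _).trans ((rank_le_card_width _).trans (by simp))

/-- for `u, w ∈ ℝ^{2l}`, the antisymmetric matrix `B = u wᵀ - w uᵀ` has rank
at most `2`, and for any antisymmetric `A` the function `ζ ↦ Pf(A + ζ B)` is affine in `ζ`. -/
theorem rank_le_two_and_pf_affine (l : ℕ) (u w : Fin (2 * l) → ℝ)
    (A : Matrix (Fin (2 * l)) (Fin (2 * l)) ℝ) (hA : Matrix.transpose A = -A) :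
    (Matrix.vecMulVec u w - Matrix.vecMulVec w u).rank ≤ 2 ∧
    ∃ c d : ℝ, ∀ ζ : ℝ,
      pf (A + ζ • (Matrix.vecMulVec u w - Matrix.vecMulVec w u)) = c + d * ζ := by
  refine ⟨rank_vecMulVec_sub_vecMulVec_le_two u w, ?_⟩
  obtain ⟨c, d, hcd⟩ := exists_altPairSum_const_add_smul_rankTwo_eq A u w
  have hB : (vecMulVec u w - vecMulVec w u)ᵀ = -(vecMulVec u w - vecMulVec w u) := by
    rw [transpose_sub, transpose_vecMulVec, transpose_vecMulVec, neg_sub]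
  have hK : (2 ^ l * l.factorial : ℝ) ≠ 0 := by positivity
  refine ⟨c / (2 ^ l * l.factorial), d / (2 ^ l * l.factorial), fun ζ => ?_⟩
  have hζ := altPairSum_const_eq_mul_pf (X := A + ζ • (vecMulVec u w - vecMulVec w u))
    (by rw [transpose_add, transpose_smul, hA, hB, smul_neg, neg_add])
  rw [hcd] at hζ
  field_simp
  linarith
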